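/- Let N ≥ 1, let G : ℝ^N → ℝ be twice continuously differentiable and let F : ℝ^N → ℝ be continuously differentiable, and let u ∈ ℝ^N be such that the Hessian matrix Hess G(u) is invertible. Then ∇V(u) = 0 if and only if u = ∇F(∇G(u)), i.e. u is a stationary point of the potential V if and only if u is a density-evolution fixed point. -/

import Mathlib

/-!
Differentiating `V(w) = ⟪w, ∇G w⟫ - G w - F (∇G w)` at `u`, the two terms `⟪∇G u, h⟫` cancel and
what remains is `h ↦ ⟪u - ∇F(∇G u), Hess G(u) h⟫`, so `∇V(u) = Hess G(u)† (u - ∇F(∇G u))`.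
The adjoint of a surjective operator is injective, hence `∇V(u) = 0` exactly at fixed points.
-/

open InnerProductSpace ContinuousLinearMap

theorem ContinuousLinearMap.adjoint_injective_of_surjective {𝕜 E F : Type*} [RCLike 𝕜]
    [NormedAddCommGroup E] [NormedAddCommGroup F] [InnerProductSpace 𝕜 E]
    [InnerProductSpace 𝕜 F] [CompleteSpace E] [CompleteSpace F] {T : E →L[𝕜] F}
    (hT : Function.Surjective T) : Function.Injective (adjoint T) := by
  refine LinearMap.ker_eq_bot.mp ?_
  rw [← orthogonal_range, LinearMap.range_eq_top.mpr hT, Submodule.top_orthogonal_eq_bot]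

variable {E : Type*} [NormedAddCommGroup E] [InnerProductSpace ℝ E] [CompleteSpace E]

theorem ContDiff.differentiable_gradient {G : E → ℝ} (hG : ContDiff ℝ 2 G) :
    Differentiable ℝ (gradient G) :=
  ((toDual ℝ E).symm.toContinuousLinearEquiv.contDiff.comp
    (hG.fderiv_right (m := 1) le_rfl)).differentiable one_ne_zero

noncomputable def potential (F G : E → ℝ) (w : E) : ℝ :=
  ⟪w, gradient G w⟫_ℝ - G w - F (gradient G w)

theorem hasGradientAt_potential {F G : E → ℝ} {u : E} {B : E →L[ℝ] E}
    (hG : DifferentiableAt ℝ G u) (hB : HasFDerivAt (gradient G) B u)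
    (hF : DifferentiableAt ℝ F (gradient G u)) :
    HasGradientAt (potential F G) (adjoint B (u - gradient F (gradient G u))) u := by
  have hV := (((hasFDerivAt_id u).inner ℝ hB).sub hG.hasGradientAt.hasFDerivAt).sub
    (hF.hasGradientAt.hasFDerivAt.comp u hB)
  rw [hasGradientAt_iff_hasFDerivAt]
  refine hV.congr_fderiv ?_
  ext h
  simp only [toDual_apply_apply, adjoint_inner_left, sub_apply, comp_apply, prod_apply, id_apply,
    id_eq, fderivInnerCLM_apply, inner_sub_left, real_inner_comm (gradient G u) h]
  ring

theorem stmt_3_general (N : ℕ)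
    (F G : EuclideanSpace ℝ (Fin N) → ℝ)
    (hG : ContDiff ℝ 2 G) (hF : ContDiff ℝ 1 F)
    (u : EuclideanSpace ℝ (Fin N))
    (hinv : Function.Bijective (fderiv ℝ (gradient G) u)) :
    gradient (fun w => ⟪w, gradient G w⟫_ℝ - G w - F (gradient G w)) u = 0
      ↔ u = gradient F (gradient G u) := by
  have hV := hasGradientAt_potential (hG.differentiable two_ne_zero u)
    (hG.differentiable_gradient u).hasFDerivAt (hF.differentiable one_ne_zero _)
  change gradient (potential F G) u = 0 ↔ _
  rw [hV.gradient, map_eq_zero_iff _ (adjoint_injective_of_surjective hinv.2), sub_eq_zero]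

/-- For `G` twice continuously differentiable and `F` continuously
differentiable on `ℝ^N`, if the Hessian `Hess G(u) = D(∇G)(u)` is invertible
(bijective as a linear map), then `u` is a stationary point of the potential
`V(u) = ⟪u, ∇G(u)⟫ − G(u) − F(∇G(u))` if and only if `u` is a density-evolution
fixed point, i.e. `u = ∇F(∇G(u))`. -/
theorem stmt_3 (N : ℕ) (hN : 1 ≤ N)
    (F G : EuclideanSpace ℝ (Fin N) → ℝ)
    (hG : ContDiff ℝ 2 G) (hF : ContDiff ℝ 1 F)
    (u : EuclideanSpace ℝ (Fin N))
    (hinv : Function.Bijective (fderiv ℝ (gradient G) u)) :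
    gradient (fun w => ⟪w, gradient G w⟫_ℝ - G w - F (gradient G w)) u = 0
      ↔ u = gradient F (gradient G u) :=
  stmt_3_general N F G hG hF u hinv
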